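/- arXiv:1410.4209 — 6 statements merged into one kernel-verified Lean document; each statement's English description precedes it below -/
import Mathlib

section
/- Let P_n be the path graph on n vertices and let k ≥ 2 be an integer with k + 1 ≤ n. Then every subset X of the vertex set with |X| = k + 1 is an AP k-landmark set of P_n (for any pair of distinct vertices v_i, v_j, at most one vertex of the path fails to separate them, namely v_{(i+j)/2} when i + j is even). -/
/-- `L` is an AP `k`-landmark set of `G`: every pair of distinct vertices of `V` is
separated (i.e. has different distances) by at least `k` vertices of `L`. -/
def isAPLandmark {V : Type*} (G : SimpleGraph V) (k : ℕ) (L : Finset V) : Prop :=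
  ∀ u v : V, u ≠ v → k ≤ (L.filter fun τ => G.dist u τ ≠ G.dist v τ).card

open SimpleGraph

lemma pathGraph_walk_exists {n : ℕ} (d : ℕ) : ∀ (u v : Fin n), v.val = u.val + d →
    ∃ w : (pathGraph n).Walk u v, w.length = d := by
  induction d with
  | zero => intro u v h; have : u = v := Fin.ext (by omega); subst this; exact ⟨.nil, rfl⟩
  | succ d ih =>
    intro u v h
    have hlt : u.val + 1 < n := by omega
    set u' : Fin n := ⟨u.val + 1, hlt⟩
    have hadj : (pathGraph n).Adj u u' := pathGraph_adj.mpr (Or.inl rfl)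
    obtain ⟨w, hw⟩ := ih u' v (by simp [u']; omega)
    exact ⟨.cons hadj w, by simp [hw]⟩

lemma pathGraph_walk_ge {n : ℕ} {u v : Fin n} (w : (pathGraph n).Walk u v) :
    Nat.dist u.val v.val ≤ w.length := by
  induction w with
  | nil => simp
  | cons h w ih =>
    rename_i a b c
    have h1 : Nat.dist a.val b.val = 1 := by
      rcases pathGraph_adj.mp h with h | h <;> simp [Nat.dist] <;> omega
    calc Nat.dist a.val c.val ≤ Nat.dist a.val b.val + Nat.dist b.val c.val :=
          Nat.dist.triangle_inequality _ _ _
      _ ≤ 1 + w.length := by omega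
      _ = (SimpleGraph.Walk.cons h w).length := by simp; omega

lemma pathGraph_dist {n : ℕ} (u v : Fin n) :
    (pathGraph n).dist u v = Nat.dist u.val v.val := by
  rcases le_total u.val v.val with h | h
  · obtain ⟨w, hw⟩ := pathGraph_walk_exists (v.val - u.val) u v (by omega)
    refine le_antisymm ?_ ?_
    · calc (pathGraph n).dist u v ≤ w.length := SimpleGraph.dist_le w
        _ = Nat.dist u.val v.val := by rw [hw, Nat.dist]; omega
    · obtain ⟨w', hw'⟩ := SimpleGraph.Reachable.exists_walk_length_eq_dist w.reachable
      rw [← hw']; exact pathGraph_walk_ge w'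
  · obtain ⟨w, hw⟩ := pathGraph_walk_exists (u.val - v.val) v u (by omega)
    refine le_antisymm ?_ ?_
    · calc (pathGraph n).dist u v ≤ w.reverse.length := SimpleGraph.dist_le w.reverse
        _ = Nat.dist u.val v.val := by rw [Walk.length_reverse, hw, Nat.dist]; omega
    · obtain ⟨w', hw'⟩ := SimpleGraph.Reachable.exists_walk_length_eq_dist w.reverse.reachable
      rw [← hw']; exact pathGraph_walk_ge w'

/-- In the path graph on `n` vertices, for `k ≥ 2` with `k + 1 ≤ n`, every subset of
`k + 1` vertices is an AP `k`-landmark set. -/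
theorem stmt_2 (n k : ℕ) (hk : 2 ≤ k) (hn : k + 1 ≤ n)
    (X : Finset (Fin n)) (hX : X.card = k + 1) :
    isAPLandmark (SimpleGraph.pathGraph n) k X := by
  intro u v huv
  classical
  have hsub : X.filter (fun τ => ¬ ((pathGraph n).dist u τ ≠ (pathGraph n).dist v τ)) ⊆
      (Finset.univ.filter (fun τ : Fin n => 2 * τ.val = u.val + v.val)) := by
    intro τ hτ
    simp only [Finset.mem_filter, not_not] at hτ
    obtain ⟨_, heq⟩ := hτ
    rw [pathGraph_dist, pathGraph_dist] at heq
    simp only [Finset.mem_filter, Finset.mem_univ, true_and]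
    have huv' : u.val ≠ v.val := fun h => huv (Fin.ext h)
    simp [Nat.dist] at heq; omega
  have hone : (Finset.univ.filter (fun τ : Fin n => 2 * τ.val = u.val + v.val)).card ≤ 1 := by
    refine Finset.card_le_one.mpr ?_
    intro a ha b hb
    simp only [Finset.mem_filter] at ha hb
    exact Fin.ext (by omega)
  have hle : (X.filter (fun τ => ¬ ((pathGraph n).dist u τ ≠ (pathGraph n).dist v τ))).card ≤ 1 :=
    le_trans (Finset.card_le_card hsub) hone
  have := Finset.card_filter_add_card_filter_not
    (s := X) (p := fun τ => (pathGraph n).dist u τ ≠ (pathGraph n).dist v τ)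
  omega
end

section
/- Let P_n be the path graph on n ≥ 3 vertices and let k ≥ 2. If X is a set of exactly k vertices of P_n that contains at least one internal vertex (a vertex v_a with 1 < a < n), then X is not an AP k-landmark set (the vertices v_{a−1} and v_{a+1} are separated by at most k − 1 vertices of X). -/
/-- In the path graph on `n ≥ 3` vertices (vertices indexed `0, …, n-1`), if `X` is a set
of exactly `k ≥ 2` vertices containing an internal vertex (index `a` with `0 < a < n-1`),
then the two neighbours of that internal vertex are separated by at most `k - 1` vertices
of `X`, and `X` is not an AP `k`-landmark set. -/
theorem stmt_4 (n k : ℕ) (hn : 3 ≤ n) (hk : 2 ≤ k)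
    (X : Finset (Fin n)) (hX : X.card = k)
    (a : ℕ) (ha0 : 0 < a) (ha1 : a < n - 1) (haX : (⟨a, by omega⟩ : Fin n) ∈ X) :
    (X.filter fun τ => (SimpleGraph.pathGraph n).dist ⟨a - 1, by omega⟩ τ ≠
        (SimpleGraph.pathGraph n).dist ⟨a + 1, by omega⟩ τ).card ≤ k - 1 ∧
    ¬ isAPLandmark (SimpleGraph.pathGraph n) k X := by
  have hd1 : (SimpleGraph.pathGraph n).dist ⟨a - 1, by omega⟩ ⟨a, by omega⟩ = 1 := by
    rw [SimpleGraph.dist_eq_one_iff_adj, SimpleGraph.pathGraph_adj]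
    left; simp; omega
  have hd2 : (SimpleGraph.pathGraph n).dist ⟨a + 1, by omega⟩ ⟨a, by omega⟩ = 1 := by
    rw [SimpleGraph.dist_eq_one_iff_adj, SimpleGraph.pathGraph_adj]
    right; simp
  have hsub : (X.filter fun τ => (SimpleGraph.pathGraph n).dist ⟨a - 1, by omega⟩ τ ≠
      (SimpleGraph.pathGraph n).dist ⟨a + 1, by omega⟩ τ) ⊆
      X.erase ⟨a, by omega⟩ := by
    intro x hx
    simp only [Finset.mem_filter] at hx
    refine Finset.mem_erase.2 ⟨?_, hx.1⟩
    rintro rfl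
    exact hx.2 (hd1.trans hd2.symm)
  have hcard : (X.filter fun τ => (SimpleGraph.pathGraph n).dist ⟨a - 1, by omega⟩ τ ≠
      (SimpleGraph.pathGraph n).dist ⟨a + 1, by omega⟩ τ).card ≤ k - 1 := by
    calc _ ≤ (X.erase ⟨a, by omega⟩).card := Finset.card_le_card hsub
    _ = k - 1 := by rw [Finset.card_erase_of_mem haX, hX]
  refine ⟨hcard, fun h => ?_⟩
  have := h ⟨a - 1, by omega⟩ ⟨a + 1, by omega⟩ (by simp [Fin.ext_iff]; try omega)
  omega
end

section
/- Let P_n be the path graph on n vertices, k ≥ 2, and let L be an NL k-landmark set of P_n with |L| = k. If L induces at least three gaps, then all anti-gaps that contain neither v_1 nor v_n have the same length. -/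
/-- `L` is an NL `k`-landmark set of `G`: every pair of distinct vertices not in `L` is
separated (i.e. has different distances) by at least `k` vertices of `L`. -/
def isNLLandmark {V : Type*} (G : SimpleGraph V) (k : ℕ) (L : Finset V) : Prop :=
  ∀ u v : V, u ≠ v → u ∉ L → v ∉ L →
    k ≤ (L.filter fun τ => G.dist u τ ≠ G.dist v τ).card

/-- The number of gaps (maximal runs of consecutive vertices not in `L`) induced by `L`
on the path with vertices `0, …, n-1`, counted via their first vertices. -/
def numGaps {n : ℕ} (L : Finset (Fin n)) : ℕ :=
  (Finset.univ.filter fun i : Fin n => i ∉ L ∧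
    (i.val = 0 ∨ (⟨i.val - 1, lt_of_le_of_lt (Nat.sub_le _ _) i.isLt⟩ : Fin n) ∈ L)).card

private lemma pathGraph_walk_le {n : ℕ} {a b : Fin n}
    (W : (SimpleGraph.pathGraph n).Walk a b) :
    b.val - a.val ≤ W.length ∧ a.val - b.val ≤ W.length := by
  induction W with
  | nil => omega
  | @cons x y z h p ih =>
    rw [SimpleGraph.pathGraph_adj] at h
    simp only [SimpleGraph.Walk.length_cons]
    omega

private lemma pathGraph_connected' {n : ℕ} (hn : 0 < n) :
    (SimpleGraph.pathGraph n).Connected := by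
  obtain ⟨m, rfl⟩ : ∃ m, n = m + 1 := ⟨n - 1, by omega⟩
  exact SimpleGraph.pathGraph_connected m

private lemma pathGraph_dist_le {n : ℕ} : ∀ (d : ℕ) (a b : Fin n), a.val + d = b.val →
    (SimpleGraph.pathGraph n).dist a b ≤ d := by
  intro d
  induction d with
  | zero =>
    intro a b h
    have : a = b := Fin.ext (by omega)
    subst this
    simp [SimpleGraph.dist_self]
  | succ d ih =>
    intro a b h
    have hconn : (SimpleGraph.pathGraph n).Connected := pathGraph_connected' a.pos
    have hlt : a.val + 1 < n := by have := b.isLt; omega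
    set a' : Fin n := ⟨a.val + 1, hlt⟩ with ha'
    have hadj : (SimpleGraph.pathGraph n).Adj a a' := by
      rw [SimpleGraph.pathGraph_adj]; left; rfl
    have h1 : (SimpleGraph.pathGraph n).dist a a' = 1 :=
      SimpleGraph.dist_eq_one_iff_adj.mpr hadj
    have h2 : (SimpleGraph.pathGraph n).dist a' b ≤ d :=
      ih a' b (by show a.val + 1 + d = b.val; omega)
    calc (SimpleGraph.pathGraph n).dist a b
        ≤ (SimpleGraph.pathGraph n).dist a a' + (SimpleGraph.pathGraph n).dist a' b :=
          hconn.dist_triangle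
      _ ≤ d + 1 := by omega

private lemma pathGraph_dist_eq {n : ℕ} (a b : Fin n) (h : a.val ≤ b.val) :
    (SimpleGraph.pathGraph n).dist a b = b.val - a.val := by
  refine le_antisymm (pathGraph_dist_le _ a b (by omega)) ?_
  obtain ⟨W, hW⟩ := (pathGraph_connected' a.pos).exists_walk_length_eq_dist a b
  have := pathGraph_walk_le W
  omega

/-- For the path graph on `n` vertices (indexed `0, …, n-1`) and `k ≥ 2`: if `L` is an NL
`k`-landmark set with `|L| = k` inducing at least three gaps, then all anti-gaps (maximal
runs of consecutive vertices of `L`) that contain neither the first vertex nor the last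
vertex of the path have the same length. -/
theorem stmt_8 (n k : ℕ) (hk : 2 ≤ k)
    (L : Finset (Fin n)) (hcard : L.card = k)
    (hL : isNLLandmark (SimpleGraph.pathGraph n) k L)
    (hgaps : 3 ≤ numGaps L)
    (s₁ t₁ s₂ t₂ : ℕ)
    (hst₁ : s₁ ≤ t₁) (htn₁ : t₁ < n)
    (hall₁ : ∀ m : ℕ, (h1 : s₁ ≤ m) → (h2 : m ≤ t₁) → (⟨m, by omega⟩ : Fin n) ∈ L)
    (hs₁ : 0 < s₁) (hsL₁ : (⟨s₁ - 1, by omega⟩ : Fin n) ∉ L)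
    (ht₁ : t₁ < n - 1) (htL₁ : (⟨t₁ + 1, by omega⟩ : Fin n) ∉ L)
    (hst₂ : s₂ ≤ t₂) (htn₂ : t₂ < n)
    (hall₂ : ∀ m : ℕ, (h1 : s₂ ≤ m) → (h2 : m ≤ t₂) → (⟨m, by omega⟩ : Fin n) ∈ L)
    (hs₂ : 0 < s₂) (hsL₂ : (⟨s₂ - 1, by omega⟩ : Fin n) ∉ L)
    (ht₂ : t₂ < n - 1) (htL₂ : (⟨t₂ + 1, by omega⟩ : Fin n) ∉ L) :
    t₁ - s₁ + 1 = t₂ - s₂ + 1 := by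
  classical
  -- every landmark separates every pair of holes
  have sep : ∀ u v : Fin n, u ≠ v → u ∉ L → v ∉ L → ∀ τ ∈ L,
      (SimpleGraph.pathGraph n).dist u τ ≠ (SimpleGraph.pathGraph n).dist v τ := by
    intro u v huv hu hv τ hτ
    have h1 := hL u v huv hu hv
    have h2 : (L.filter fun τ =>
        (SimpleGraph.pathGraph n).dist u τ ≠ (SimpleGraph.pathGraph n).dist v τ) = L :=
      Finset.eq_of_subset_of_card_le (Finset.filter_subset _ _) (by omega)
    rw [← h2] at hτ
    exact (Finset.mem_filter.mp hτ).2
  -- holes as a predicate on ℕ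
  set P : ℕ → Prop := fun m => ∃ h : m < n, (⟨m, h⟩ : Fin n) ∉ L with hP
  -- the midpoint of two holes is a hole
  have mid : ∀ a d : ℕ, 0 < d → P a → P (a + 2 * d) → P (a + d) := by
    rintro a d hd ⟨ha, haL⟩ ⟨hb, hbL⟩
    refine ⟨by omega, fun hmem => ?_⟩
    have hne : (⟨a, ha⟩ : Fin n) ≠ ⟨a + 2 * d, hb⟩ := by
      simp only [ne_eq, Fin.mk.injEq]; omega
    have hsep := sep ⟨a, ha⟩ ⟨a + 2 * d, hb⟩ hne haL hbL ⟨a + d, by omega⟩ hmem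
    have e1 : (SimpleGraph.pathGraph n).dist ⟨a, ha⟩ ⟨a + d, by omega⟩ = (a + d) - a :=
      pathGraph_dist_eq _ _ (by show a ≤ a + d; omega)
    have e2 : (SimpleGraph.pathGraph n).dist ⟨a + d, by omega⟩ ⟨a + 2 * d, hb⟩
        = (a + 2 * d) - (a + d) :=
      pathGraph_dist_eq _ _ (by show a + d ≤ a + 2 * d; omega)
    rw [SimpleGraph.dist_comm] at e2
    rw [e1, e2] at hsep
    omega
  -- two adjacent consecutive-hole pairs have equal spacing
  have stepB : ∀ u v z : ℕ, u < v → v < z → P u → P v → P z →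
      (∀ m, u < m → m < v → ¬ P m) → (∀ m, v < m → m < z → ¬ P m) →
      v - u = z - v := by
    intro u v z huv hvz Pu Pv Pz nh1 nh2
    have odd1 : (v - u) % 2 = 1 := by
      by_contra hc
      obtain ⟨d, hd⟩ : ∃ d, v - u = 2 * d := ⟨(v - u) / 2, by omega⟩
      have hv' : u + 2 * d = v := by omega
      have := mid u d (by omega) Pu (hv' ▸ Pv)
      exact nh1 (u + d) (by omega) (by omega) this
    have odd2 : (z - v) % 2 = 1 := by
      by_contra hc
      obtain ⟨d, hd⟩ : ∃ d, z - v = 2 * d := ⟨(z - v) / 2, by omega⟩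
      have hz' : v + 2 * d = z := by omega
      have := mid v d (by omega) Pv (hz' ▸ Pz)
      exact nh2 (v + d) (by omega) (by omega) this
    obtain ⟨e, he⟩ : ∃ e, z - u = 2 * e := ⟨(z - u) / 2, by omega⟩
    have hz' : u + 2 * e = z := by omega
    have hm := mid u e (by omega) Pu (hz' ▸ Pz)
    rcases lt_trichotomy (u + e) v with h | h | h
    · exact absurd hm (nh1 _ (by omega) h)
    · omega
    · exact absurd hm (nh2 _ h (by omega))
  -- all consecutive-hole spacings are equal (chain along the path)
  have chain : ∀ N u₁ v₁ u₂ v₂ : ℕ, u₂ - u₁ ≤ N → u₁ ≤ u₂ → u₁ < v₁ → u₂ < v₂ →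
      P u₁ → P v₁ → P u₂ → P v₂ →
      (∀ m, u₁ < m → m < v₁ → ¬ P m) → (∀ m, u₂ < m → m < v₂ → ¬ P m) →
      v₁ - u₁ = v₂ - u₂ := by
    intro N
    induction N with
    | zero =>
      intro u₁ v₁ u₂ v₂ hN hle h1 h2 P1 Q1 P2 Q2 nh1 nh2
      have heq : u₁ = u₂ := by omega
      subst heq
      rcases lt_trichotomy v₁ v₂ with h | h | h
      · exact absurd Q1 (nh2 _ h1 h)
      · omega
      · exact absurd Q2 (nh1 _ h2 h)
    | succ N ih =>
      intro u₁ v₁ u₂ v₂ hN hle h1 h2 P1 Q1 P2 Q2 nh1 nh2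
      rcases eq_or_lt_of_le hle with heq | hlt
      · subst heq
        rcases lt_trichotomy v₁ v₂ with h | h | h
        · exact absurd Q1 (nh2 _ h1 h)
        · omega
        · exact absurd Q2 (nh1 _ h2 h)
      · have hv1u2 : v₁ ≤ u₂ := by
          by_contra h
          push_neg at h
          exact nh1 u₂ hlt h P2
        rcases eq_or_lt_of_le hv1u2 with he | hl
        · subst he
          exact stepB u₁ v₁ v₂ h1 h2 P1 Q1 Q2 nh1 nh2
        · have hex : ∃ m, v₁ < m ∧ m ≤ u₂ ∧ P m := ⟨u₂, hl, le_refl _, P2⟩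
          obtain ⟨hw1, hw2, hw3⟩ := Nat.find_spec hex
          have hmin : ∀ m, v₁ < m → m < Nat.find hex → ¬ P m := by
            intro m hm1 hm2 hPm
            exact Nat.find_min hex hm2 ⟨hm1, by omega, hPm⟩
          have e1 := stepB u₁ v₁ (Nat.find hex) h1 hw1 P1 Q1 hw3 nh1 hmin
          have e2 := ih v₁ (Nat.find hex) u₂ v₂ (by omega) (by omega) hw1 h2 Q1 hw3 P2 Q2 hmin nh2
          omega
  -- apply to the two anti-gaps
  have Pa : P (s₁ - 1) := ⟨by omega, hsL₁⟩
  have Pb : P (t₁ + 1) := ⟨by omega, htL₁⟩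
  have Pc : P (s₂ - 1) := ⟨by omega, hsL₂⟩
  have Pd : P (t₂ + 1) := ⟨by omega, htL₂⟩
  have nh₁ : ∀ m, s₁ - 1 < m → m < t₁ + 1 → ¬ P m := by
    rintro m hm1 hm2 ⟨hmn, hmL⟩
    exact hmL (hall₁ m (by omega) (by omega))
  have nh₂ : ∀ m, s₂ - 1 < m → m < t₂ + 1 → ¬ P m := by
    rintro m hm1 hm2 ⟨hmn, hmL⟩
    exact hmL (hall₂ m (by omega) (by omega))
  rcases le_total s₁ s₂ with h | h
  · have := chain (s₂ + t₂) (s₁ - 1) (t₁ + 1) (s₂ - 1) (t₂ + 1) (by omega) (by omega)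
      (by omega) (by omega) Pa Pb Pc Pd nh₁ nh₂
    omega
  · have := chain (s₁ + t₁) (s₂ - 1) (t₂ + 1) (s₁ - 1) (t₁ + 1) (by omega) (by omega)
      (by omega) (by omega) Pc Pd Pa Pb nh₂ nh₁
    omega
end

section
/- Let P_n be the path graph on n vertices, k ≥ 2, and let L be an NL k-landmark set of P_n with |L| = k. If L induces at least two gaps, then the set of the n − k holes is of the form {v_i, v_{i+ρ}, v_{i+2ρ}, …, v_{i+(n−k−1)ρ}} for some odd integer ρ ≥ 3 and some i ≥ 1 with i + (n−k−1)ρ ≤ n. Consequently, if P_n has an NL k-landmark set of k vertices inducing at least two gaps, then n ≤ 3k/2 + 1. -/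
private lemma pathWalk_len {n : ℕ} {u v : Fin n} (p : (SimpleGraph.pathGraph n).Walk u v) :
    Nat.dist u.val v.val ≤ p.length := by
  induction p with
  | nil => simp [Nat.dist_self]
  | cons h p ih =>
    rw [SimpleGraph.pathGraph_adj] at h
    simp only [Nat.dist] at ih ⊢
    simp only [SimpleGraph.Walk.length_cons]
    omega

private lemma pathGraph_walk {n : ℕ} : ∀ (d : ℕ) (u v : Fin n), v.val = u.val + d →
    ∃ p : (SimpleGraph.pathGraph n).Walk u v, p.length = d := by
  intro d
  induction d with
  | zero =>
    intro u v h
    have : u = v := Fin.ext (by omega)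
    subst this; exact ⟨.nil, rfl⟩
  | succ d ih =>
    intro u v h
    have hu1 : u.val + 1 < n := by have := v.isLt; omega
    have hadj : (SimpleGraph.pathGraph n).Adj u ⟨u.val + 1, hu1⟩ := by
      rw [SimpleGraph.pathGraph_adj]; left; rfl
    obtain ⟨p, hp⟩ := ih ⟨u.val + 1, hu1⟩ v (by simpa using by omega)
    exact ⟨.cons hadj p, by simp [hp]⟩

private lemma pathGraph_dist_eq_s9 {n : ℕ} (u v : Fin n) :
    (SimpleGraph.pathGraph n).dist u v = Nat.dist u.val v.val := by
  apply le_antisymm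
  · rcases le_or_gt u.val v.val with h | h
    · obtain ⟨p, hp⟩ := pathGraph_walk (v.val - u.val) u v (by omega)
      calc (SimpleGraph.pathGraph n).dist u v ≤ p.length := SimpleGraph.dist_le p
        _ = Nat.dist u.val v.val := by rw [hp]; simp [Nat.dist]; omega
    · obtain ⟨p, hp⟩ := pathGraph_walk (u.val - v.val) v u (by omega)
      rw [SimpleGraph.dist_comm]
      calc (SimpleGraph.pathGraph n).dist v u ≤ p.length := SimpleGraph.dist_le p
        _ = Nat.dist u.val v.val := by rw [hp]; simp [Nat.dist]; omega
  · obtain ⟨p, hp⟩ := (SimpleGraph.pathGraph_preconnected n u v).exists_walk_length_eq_dist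
    rw [← hp]; exact pathWalk_len p

/-- For the path graph on `n` vertices (vertices `v_1, …, v_n`, here indexed `0, …, n-1`,
so `v_m` has index `m - 1`) and `k ≥ 2`: if `L` is an NL `k`-landmark set with `|L| = k`
inducing at least two gaps, then the holes (vertices not in `L`) are exactly
`v_i, v_{i+ρ}, …, v_{i+(n-k-1)ρ}` for some odd `ρ ≥ 3` and some `i ≥ 1` with
`i + (n-k-1)ρ ≤ n`; consequently `2n ≤ 3k + 2` (i.e. `n ≤ 3k/2 + 1`). -/
theorem stmt_9 (n k : ℕ) (hk : 2 ≤ k)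
    (L : Finset (Fin n)) (hcard : L.card = k)
    (hL : isNLLandmark (SimpleGraph.pathGraph n) k L)
    (hgaps : 2 ≤ numGaps L) :
    (∃ ρ i : ℕ, Odd ρ ∧ 3 ≤ ρ ∧ 1 ≤ i ∧ i + (n - k - 1) * ρ ≤ n ∧
      ∀ x : Fin n, x ∉ L ↔ ∃ j : ℕ, j ≤ n - k - 1 ∧ x.val + 1 = i + j * ρ) ∧
    2 * n ≤ 3 * k + 2 := by
  classical
  -- Every landmark separates every pair of distinct holes.
  have hsep : ∀ u v : Fin n, u ≠ v → u ∉ L → v ∉ L → ∀ τ ∈ L,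
      (SimpleGraph.pathGraph n).dist u τ ≠ (SimpleGraph.pathGraph n).dist v τ := by
    intro u v huv hu hv τ hτ
    have hle := hL u v huv hu hv
    have heq : (L.filter fun τ => (SimpleGraph.pathGraph n).dist u τ ≠
        (SimpleGraph.pathGraph n).dist v τ) = L :=
      Finset.eq_of_subset_of_card_le (Finset.filter_subset _ _) (by omega)
    have : τ ∈ (L.filter fun τ => (SimpleGraph.pathGraph n).dist u τ ≠
        (SimpleGraph.pathGraph n).dist v τ) := by rw [heq]; exact hτ
    exact (Finset.mem_filter.mp this).2
  set H : Finset (Fin n) := Lᶜ with hHdef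
  have hmemH : ∀ x : Fin n, x ∈ H ↔ x ∉ L := fun x => Finset.mem_compl
  -- midpoint of two holes (when integral) is a hole
  have hmid : ∀ a b c : Fin n, a ∈ H → b ∈ H → a.val < b.val →
      a.val + b.val = 2 * c.val → c ∈ H := by
    intro a b c ha hb hab hc
    rw [hmemH]; intro hcL
    have hne : a ≠ b := fun h => by rw [h] at hab; omega
    have := hsep a b hne ((hmemH a).mp ha) ((hmemH b).mp hb) c hcL
    apply this
    rw [pathGraph_dist_eq_s9, pathGraph_dist_eq_s9]
    simp only [Nat.dist]; omega
  have hHcard : H.card = n - k := by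
    rw [hHdef, Finset.card_compl, hcard, Fintype.card_fin]
  set m : ℕ := H.card with hmdef
  have hm2 : 2 ≤ m := by
    refine le_trans hgaps (Finset.card_le_card ?_)
    intro i hi
    have := (Finset.mem_filter.mp hi).2.1
    exact (hmemH i).mpr this
  -- the sorted enumeration of holes
  set e := H.orderEmbOfFin (rfl : H.card = m) with hedef
  set F : ℕ → ℕ := fun j => if h : j < m then (e ⟨j, h⟩).val else 0 with hFdef
  have hFval : ∀ j (h : j < m), F j = (e ⟨j, h⟩).val := by
    intro j h; simp [hFdef, h]
  have hFlt : ∀ j, j < m → F j < n := by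
    intro j h; rw [hFval j h]; exact (e ⟨j, h⟩).isLt
  have hFmemH : ∀ j (h : j < m) (hn : F j < n), (⟨F j, hn⟩ : Fin n) ∈ H := by
    intro j h hn
    have : (⟨F j, hn⟩ : Fin n) = e ⟨j, h⟩ := Fin.ext (hFval j h)
    rw [this]; exact Finset.orderEmbOfFin_mem H rfl _
  have hFsurj : ∀ x : Fin n, x ∈ H → ∃ j, ∃ h : j < m, F j = x.val := by
    intro x hx
    have : x ∈ Set.range (H.orderEmbOfFin (rfl : H.card = m)) := by
      rw [Finset.range_orderEmbOfFin]; exact hx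
    obtain ⟨l, hl⟩ := this
    exact ⟨l.val, l.isLt, by rw [hFval l.val l.isLt]; rw [← hl]⟩
  have hFstrict : ∀ a b, a < b → (hb : b < m) → F a < F b := by
    intro a b hab hb
    rw [hFval a (lt_trans hab hb), hFval b hb]
    exact e.strictMono (by exact hab)
  have hlt_of : ∀ a b, a < m → b < m → F a < F b → a < b := by
    intro a b ha hb hF
    by_contra hc
    push_neg at hc
    rcases eq_or_lt_of_le hc with h | h
    · rw [h] at hF; omega
    · have := hFstrict b a h ha; omega
  -- midpoint in terms of F
  have hmidF : ∀ a b, a < m → b < m → F a < F b → 2 ∣ (F a + F b) →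
      ∃ c, c < m ∧ 2 * F c = F a + F b ∧ F a < F c ∧ F c < F b := by
    intro a b ha hb hab hpar
    obtain ⟨t, ht⟩ := hpar
    have htn : t < n := lt_of_le_of_lt (by omega) (hFlt b hb)
    have hcH : (⟨t, htn⟩ : Fin n) ∈ H := by
      refine hmid ⟨F a, hFlt a ha⟩ ⟨F b, hFlt b hb⟩ ⟨t, htn⟩
        (hFmemH a ha _) (hFmemH b hb _) hab (by simpa using by omega)
    obtain ⟨c, hc, hFc⟩ := hFsurj _ hcH
    exact ⟨c, hc, by simp at hFc; omega, by simp at hFc; omega, by simp at hFc; omega⟩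
  -- consecutive holes differ by an odd amount
  have hstep_odd : ∀ j, j + 1 < m → ¬ (2 ∣ (F j + F (j + 1))) := by
    intro j hj hpar
    obtain ⟨c, hc, h2, hl, hr⟩ := hmidF j (j + 1) (by omega) hj
      (hFstrict j (j + 1) (by omega) hj) hpar
    have h1 := hlt_of j c (by omega) hc hl
    have h2' := hlt_of c (j + 1) hc hj hr
    omega
  -- equal consecutive differences
  have hstep_eq : ∀ j, j + 2 < m → 2 * F (j + 1) = F j + F (j + 2) := by
    intro j hj
    have ho1 := hstep_odd j (by omega)
    have ho2 : ¬ (2 ∣ (F (j + 1) + F (j + 2))) := hstep_odd (j + 1) (by omega)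
    have hpar : 2 ∣ (F j + F (j + 2)) := by omega
    obtain ⟨c, hc, h2, hl, hr⟩ := hmidF j (j + 2) (by omega) hj
      (lt_trans (hFstrict j (j+1) (by omega) (by omega)) (hFstrict (j+1) (j+2) (by omega) hj))
      hpar
    have h1 := hlt_of j c (by omega) hc hl
    have h2' := hlt_of c (j + 2) hc hj hr
    have : c = j + 1 := by omega
    rw [this] at h2; omega
  set ρ : ℕ := F 1 - F 0 with hρdef
  have hF01 : F 0 < F 1 := hFstrict 0 1 (by omega) (by omega)
  have hdiff : ∀ j, j + 1 < m → F (j + 1) = F j + ρ := by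
    intro j
    induction j with
    | zero =>
      intro h
      have e1 : F (0 + 1) = F 1 := rfl
      omega
    | succ j ih =>
      intro h
      have h1 : 2 * F (j + 1) = F j + F (j + 2) := hstep_eq j (by omega)
      have h2 := ih (by omega)
      have e1 : F (j + 1 + 1) = F (j + 2) := rfl
      omega
  have hAP : ∀ j, j < m → F j = F 0 + j * ρ := by
    intro j
    induction j with
    | zero => intro h; omega
    | succ j ih =>
      intro h
      have h1 := hdiff j h
      have h2 := ih (by omega)
      rw [h1, h2]; ring
  have hρodd : ¬ (2 ∣ ρ) := by
    have h1 : ¬ (2 ∣ (F 0 + F 1)) := hstep_odd 0 hm2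
    omega
  -- ρ ≠ 1, else only one gap
  have hρ3 : 3 ≤ ρ := by
    by_contra hc
    have hρ1 : ρ = 1 := by omega
    -- show the gap-start set has at most one element
    have hsub : (Finset.univ.filter fun i : Fin n => i ∉ L ∧
        (i.val = 0 ∨ (⟨i.val - 1, lt_of_le_of_lt (Nat.sub_le _ _) i.isLt⟩ : Fin n) ∈ L))
        ⊆ {(⟨F 0, hFlt 0 (by omega)⟩ : Fin n)} := by
      intro i hi
      obtain ⟨hiL, hcase⟩ := Finset.mem_filter.mp hi |>.2 |> fun h => h
      obtain ⟨l, hl, hFl⟩ := hFsurj i ((hmemH i).mpr hiL)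
      rcases Nat.eq_zero_or_pos l with hl0 | hlpos
      · rw [hl0] at hFl
        simp only [Finset.mem_singleton]
        exact (Fin.ext hFl.symm)
      · exfalso
        have hAPl := hAP l hl
        have hAPl1 := hAP (l - 1) (by omega)
        have hival : i.val = F 0 + l := by rw [← hFl, hAPl, hρ1]; ring
        have hne0 : i.val ≠ 0 := by omega
        rcases hcase with h0 | hpred
        · exact hne0 h0
        · have hpn : i.val - 1 < n := lt_of_le_of_lt (Nat.sub_le _ _) i.isLt
          have hvv : F (l - 1) = i.val - 1 := by rw [hAPl1, hρ1]; omega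
          have hmem : (⟨i.val - 1, hpn⟩ : Fin n) ∈ H := by
            have := hFmemH (l - 1) (by omega) (by omega)
            have heqf : (⟨F (l-1), by omega⟩ : Fin n) = ⟨i.val - 1, hpn⟩ := Fin.ext hvv
            rwa [heqf] at this
          exact (hmemH _).mp hmem hpred
    have := Finset.card_le_card hsub
    simp only [Finset.card_singleton] at this
    have : numGaps L ≤ 1 := this
    omega
  have hOdd : Odd ρ := Nat.odd_iff.mpr (by omega)
  have hkn : k ≤ n := by
    rw [← hcard]
    calc L.card ≤ Finset.univ.card := Finset.card_le_univ L
      _ = n := by simp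
  have hmnk : m = n - k := hmdef ▸ hHcard
  have hlast : F (m - 1) = F 0 + (m - 1) * ρ := hAP (m - 1) (by omega)
  have hlastlt : F (m - 1) < n := hFlt (m - 1) (by omega)
  have hmul : (m - 1) * 3 ≤ (m - 1) * ρ := Nat.mul_le_mul_left _ hρ3
  constructor
  · refine ⟨ρ, F 0 + 1, hOdd, hρ3, by omega, ?_, ?_⟩
    · have : n - k - 1 = m - 1 := by omega
      rw [this]; omega
    · intro x
      rw [← hmemH]
      constructor
      · intro hx
        obtain ⟨l, hl, hFl⟩ := hFsurj x hx
        refine ⟨l, by omega, ?_⟩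
        have := hAP l hl
        omega
      · rintro ⟨j, hj, hx⟩
        have hjm : j < m := by omega
        have hFj : F j = x.val := by have := hAP j hjm; omega
        have := hFmemH j hjm (by omega)
        have heqf : (⟨F j, by omega⟩ : Fin n) = x := Fin.ext hFj
        rwa [heqf] at this
  · omega
end

section
/- Let W be the complete wheel graph on n ≥ 6 vertices and let L be an AP 2-landmark set of W. Then L satisfies: for every i, if c_i ∉ L and c_{i+1} ∉ L, then c_{i−3}, c_{i−2}, c_{i−1}, c_{i+2}, c_{i+3}, c_{i+4} ∈ L (indices modulo n−1). -/
/-- The complete wheel graph with cycle `c_1, …, c_m` (encoded as `some i` for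
`i : ZMod m`) and central vertex `h` (encoded as `none`); a wheel on `n` vertices has
`m = n - 1`. -/
def wheelGraph (m : ℕ) : SimpleGraph (Option (ZMod m)) :=
  SimpleGraph.fromRel fun u v => u = none ∨ ∃ i : ZMod m, u = some i ∧ v = some (i + 1)

theorem one_ne_zero_of_two_ne_zero {R : Type*} [AddMonoidWithOne R] (h2 : (2 : R) ≠ 0) :
    (1 : R) ≠ 0 :=
  fun h1 => h2 (by rw [← one_add_one_eq_two, h1, add_zero])

theorem isAPLandmark.mem_and_mem_of_separators {V : Type*} {G : SimpleGraph V} {L : Finset V}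
    (hL : isAPLandmark G 2 L) {u v p q : V} (huv : u ≠ v) (hpq : p ≠ q)
    (hsep : ∀ τ ∈ L, G.dist u τ ≠ G.dist v τ → τ = p ∨ τ = q) :
    p ∈ L ∧ q ∈ L := by
  classical
  have hS : L.filter (fun τ => G.dist u τ ≠ G.dist v τ) = {p, q} :=
    Finset.eq_of_subset_of_card_le
      (fun τ hτ => by
        obtain ⟨hτL, hτsep⟩ := Finset.mem_filter.mp hτ
        simpa using hsep τ hτL hτsep)
      ((Finset.card_pair hpq).trans_le (hL u v huv))
  have hsub := Finset.filter_subset (fun τ => G.dist u τ ≠ G.dist v τ) L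
  rw [hS] at hsub
  exact ⟨hsub (by simp), hsub (by simp)⟩

namespace wheelGraph

open SimpleGraph

variable {m : ℕ}

theorem adj_none_some (j : ZMod m) : (wheelGraph m).Adj none (some j) := by
  simp [wheelGraph]

theorem adj_some_add_one (h1 : (1 : ZMod m) ≠ 0) (j : ZMod m) :
    (wheelGraph m).Adj (some j) (some (j + 1)) := by
  simp [wheelGraph, h1]

theorem not_adj_some_some {j k : ZMod m} (hk : k ≠ j + 1) (hj : j ≠ k + 1) :
    ¬(wheelGraph m).Adj (some j) (some k) := by
  simp [wheelGraph, hk, hj]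

theorem dist_none_some (j : ZMod m) : (wheelGraph m).dist none (some j) = 1 :=
  dist_eq_one_iff_adj.mpr (adj_none_some j)

theorem dist_some_none (j : ZMod m) : (wheelGraph m).dist (some j) none = 1 := by
  rw [dist_comm, dist_none_some]

theorem dist_some_some_of_ne {j k : ZMod m} (hjk : j ≠ k) (hk : k ≠ j + 1) (hj : j ≠ k + 1) :
    (wheelGraph m).dist (some j) (some k) = 2 := by
  let w : (wheelGraph m).Walk (some j) (some k) :=
    .cons (adj_none_some j).symm (.cons (adj_none_some k) .nil)
  have hle : (wheelGraph m).dist (some j) (some k) ≤ 2 := dist_le w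
  have hne0 : (wheelGraph m).dist (some j) (some k) ≠ 0 := by
    rw [Ne, (Walk.reachable w).dist_eq_zero_iff, Option.some_inj]
    exact hjk
  have hne1 : (wheelGraph m).dist (some j) (some k) ≠ 1 := by
    rw [Ne, dist_eq_one_iff_adj]
    exact not_adj_some_some hk hj
  omega

theorem eq_of_dist_ne_of_adjacent {a b c d : ZMod m} (hb : b = a + 1) (hc : c = b + 1)
    (hd : d = c + 1) {τ : Option (ZMod m)}
    (hτ : (wheelGraph m).dist (some b) τ ≠ (wheelGraph m).dist (some c) τ) :
    τ = some a ∨ τ = some b ∨ τ = some c ∨ τ = some d := by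
  obtain _ | j := τ
  · simp [dist_some_none] at hτ
  by_contra! hne
  simp only [ne_eq, Option.some_inj] at hne
  obtain ⟨ha', hb', hc', hd'⟩ := hne
  apply hτ
  rw [dist_some_some_of_ne (Ne.symm hb') (by rwa [← hc])
      (fun h => ha' (by linear_combination hb - h)),
    dist_some_some_of_ne (Ne.symm hc') (by rwa [← hd])
      (fun h => hb' (by linear_combination hc - h))]

theorem eq_of_dist_ne_of_dist_two {a b d e : ZMod m} (hb : b = a + 1) (hd : d = b + 2)
    (he : e = d + 1) {τ : Option (ZMod m)}
    (hτ : (wheelGraph m).dist (some b) τ ≠ (wheelGraph m).dist (some d) τ) :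
    τ = some a ∨ τ = some b ∨ τ = some d ∨ τ = some e := by
  obtain _ | j := τ
  · simp [dist_some_none] at hτ
  by_contra! hne
  simp only [ne_eq, Option.some_inj] at hne
  obtain ⟨ha', hb', hd', he'⟩ := hne
  apply hτ
  by_cases hjc : j = b + 1
  · -- `c_{b+1}` is adjacent to both `c_b` and `c_{b+2}`, unless `1 = 0` and the two coincide.
    have hd1 : d = b + 1 + 1 := by rw [hd]; ring
    subst hjc hd1
    by_cases h1 : (1 : ZMod m) = 0
    · simp [h1]
    rw [dist_eq_one_iff_adj.mpr (adj_some_add_one h1 b), dist_comm,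
      dist_eq_one_iff_adj.mpr (adj_some_add_one h1 (b + 1))]
  rw [dist_some_some_of_ne (Ne.symm hb') hjc (fun h => ha' (by linear_combination hb - h)),
    dist_some_some_of_ne (Ne.symm hd') (by rwa [← he])
      (fun h => hjc (by linear_combination hd - h))]

end wheelGraph

namespace isAPLandmark

variable {m : ℕ} {L : Finset (Option (ZMod m))} {a b c d : ZMod m}

theorem wheelGraph_mem_left_of_adjacent (hL : isAPLandmark (wheelGraph m) 2 L)
    (h1 : (1 : ZMod m) ≠ 0) (hcL : some c ∉ L) (hdL : some d ∉ L) (hb : b = a + 1 := by ring)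
    (hc : c = b + 1 := by ring) (hd : d = c + 1 := by ring) : some a ∈ L ∧ some b ∈ L :=
  hL.mem_and_mem_of_separators (u := some b) (v := some c) (by simp [hc, h1]) (by simp [hb, h1])
    fun τ hτL hτ => by
      rcases wheelGraph.eq_of_dist_ne_of_adjacent hb hc hd hτ with rfl | rfl | rfl | rfl <;>
        simp_all

theorem wheelGraph_mem_right_of_adjacent (hL : isAPLandmark (wheelGraph m) 2 L)
    (h1 : (1 : ZMod m) ≠ 0) (haL : some a ∉ L) (hbL : some b ∉ L) (hb : b = a + 1 := by ring)
    (hc : c = b + 1 := by ring) (hd : d = c + 1 := by ring) : some c ∈ L ∧ some d ∈ L :=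
  hL.mem_and_mem_of_separators (u := some b) (v := some c) (by simp [hc, h1]) (by simp [hd, h1])
    fun τ hτL hτ => by
      rcases wheelGraph.eq_of_dist_ne_of_adjacent hb hc hd hτ with rfl | rfl | rfl | rfl <;>
        simp_all

theorem wheelGraph_mem_left_of_dist_two (hL : isAPLandmark (wheelGraph m) 2 L)
    (h2 : (2 : ZMod m) ≠ 0) (hcL : some c ∉ L) (hdL : some d ∉ L) (hb : b = a + 1 := by ring)
    (hc : c = b + 2 := by ring) (hd : d = c + 1 := by ring) : some a ∈ L ∧ some b ∈ L :=
  hL.mem_and_mem_of_separators (u := some b) (v := some c) (by simp [hc, h2])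
    (by simp [hb, one_ne_zero_of_two_ne_zero h2])
    fun τ hτL hτ => by
      rcases wheelGraph.eq_of_dist_ne_of_dist_two hb hc hd hτ with rfl | rfl | rfl | rfl <;>
        simp_all

theorem wheelGraph_mem_right_of_dist_two (hL : isAPLandmark (wheelGraph m) 2 L)
    (h2 : (2 : ZMod m) ≠ 0) (haL : some a ∉ L) (hbL : some b ∉ L) (hb : b = a + 1 := by ring)
    (hc : c = b + 2 := by ring) (hd : d = c + 1 := by ring) : some c ∈ L ∧ some d ∈ L :=
  hL.mem_and_mem_of_separators (u := some b) (v := some c) (by simp [hc, h2])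
    (by simp [hd, one_ne_zero_of_two_ne_zero h2])
    fun τ hτL hτ => by
      rcases wheelGraph.eq_of_dist_ne_of_dist_two hb hc hd hτ with rfl | rfl | rfl | rfl <;>
        simp_all

end isAPLandmark

/-- For the complete wheel graph on `n ≥ 6` vertices, every AP `2`-landmark set `L`
satisfies: for every `i`, if `c_i ∉ L` and `c_{i+1} ∉ L`, then
`c_{i-3}, c_{i-2}, c_{i-1}, c_{i+2}, c_{i+3}, c_{i+4} ∈ L` (indices modulo `n - 1`). -/
theorem stmt_13 (n : ℕ) (hn : 6 ≤ n)
    (L : Finset (Option (ZMod (n - 1))))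
    (hL : isAPLandmark (wheelGraph (n - 1)) 2 L) :
    ∀ i : ZMod (n - 1), some i ∉ L → some (i + 1) ∉ L →
      some (i - 3) ∈ L ∧ some (i - 2) ∈ L ∧ some (i - 1) ∈ L ∧
      some (i + 2) ∈ L ∧ some (i + 3) ∈ L ∧ some (i + 4) ∈ L := by
  intro i hi hi1
  have hcast (k : ℕ) (hk : 0 < k) (hkn : k < n - 1) : (k : ZMod (n - 1)) ≠ 0 := by
    rw [Ne, ZMod.natCast_eq_zero_iff]
    exact Nat.not_dvd_of_pos_of_lt hk hkn
  have h1 : (1 : ZMod (n - 1)) ≠ 0 := by exact_mod_cast hcast 1 one_pos (by omega)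
  have h2 : (2 : ZMod (n - 1)) ≠ 0 := by exact_mod_cast hcast 2 two_pos (by omega)
  obtain ⟨hm3, hm2⟩ : some (i - 3) ∈ L ∧ some (i - 2) ∈ L :=
    hL.wheelGraph_mem_left_of_dist_two h2 hi hi1
  obtain ⟨-, hm1⟩ : some (i - 2) ∈ L ∧ some (i - 1) ∈ L :=
    hL.wheelGraph_mem_left_of_adjacent h1 hi hi1
  obtain ⟨hp2, hp3⟩ : some (i + 2) ∈ L ∧ some (i + 3) ∈ L :=
    hL.wheelGraph_mem_right_of_adjacent h1 hi hi1
  obtain ⟨-, hp4⟩ : some (i + 3) ∈ L ∧ some (i + 4) ∈ L :=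
    hL.wheelGraph_mem_right_of_dist_two h2 hi hi1
  exact ⟨hm3, hm2, hm1, hp2, hp3, hp4⟩
end

section
/- Let W be the complete wheel graph on n ≥ 6 vertices. Every set of vertices satisfying the condition 'if c_i ∉ L and c_{i+1} ∉ L then c_{i−3}, c_{i−2}, c_{i−1}, c_{i+2}, c_{i+3}, c_{i+4} ∈ L (indices modulo n−1)' contains at least ⌊n/2⌋ cycle vertices. Moreover, if L ⊆ C ∪ {h} satisfies |L ∩ C| ≥ 4, then for every i the pair h, c_i is separated by at least two vertices of L ∩ C, and hence if such an L is an AP 2-landmark set then so is L \ {h}. -/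
/-- The AP `k = 2` condition on a set of vertices of the wheel: whenever two consecutive
cycle vertices `c_i, c_{i+1}` are not in `L`, the three cycle vertices preceding them and
the three cycle vertices following them are in `L`. -/
def apCond2 (m : ℕ) (L : Finset (Option (ZMod m))) : Prop :=
  ∀ i : ZMod m, some i ∉ L → some (i + 1) ∉ L →
    some (i - 3) ∈ L ∧ some (i - 2) ∈ L ∧ some (i - 1) ∈ L ∧
    some (i + 2) ∈ L ∧ some (i + 3) ∈ L ∧ some (i + 4) ∈ L

open Finset

lemma card_le_two_mul_card_of_gap {G : Type*} [AddCommGroup G] [Fintype G] [DecidableEq G]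
    (a : G) (S : Finset G) (hS : ∀ g ∉ S, g + a ∉ S → g - a ∈ S ∧ g - a - a ∈ S) :
    Fintype.card G ≤ 2 * #S := by
  have hcompl : #Sᶜ ≤ #S := by
    refine card_le_card_of_injOn (fun g => if g + a ∈ S then g + a else g - a) ?_ ?_
    · intro g hg
      simp only [coe_compl, Set.mem_compl_iff, mem_coe] at hg
      dsimp only
      split_ifs with h
      exacts [h, (hS g hg h).1]
    · intro g hg g' hg' hgg'
      simp only [coe_compl, Set.mem_compl_iff, mem_coe] at hg hg'
      dsimp only at hgg'
      split_ifs at hgg' with h h' h'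
      · exact add_right_cancel hgg'
      · exact absurd ((show g' - a - a = g by rw [← hgg']; abel) ▸ (hS g' hg' h').2) hg
      · exact absurd ((show g - a - a = g' by rw [hgg']; abel) ▸ (hS g hg h).2) hg'
      · exact sub_left_injective hgg'
  have := card_compl_add_card S
  omega

lemma apCond2.le_two_mul_card_erase_none {m : ℕ} [NeZero m] {L : Finset (Option (ZMod m))}
    (hL : apCond2 m L) : m ≤ 2 * #(L.erase none) := by
  have := card_le_two_mul_card_of_gap (1 : ZMod m) L.eraseNone fun i hi hi' => by
    simp only [mem_eraseNone] at hi hi' ⊢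
    exact ⟨(hL i hi hi').2.2.1, by simpa [sub_sub, one_add_one_eq_two] using (hL i hi hi').2.1⟩
  rwa [ZMod.card, card_eraseNone_eq_card_erase] at this

lemma isAPLandmark_erase_of_forall_adj {V : Type*} [DecidableEq V] {G : SimpleGraph V}
    {k : ℕ} {L : Finset V} {h : V} (hadj : ∀ v ≠ h, G.Adj h v)
    (hsep : ∀ v ≠ h, k ≤ #((L.erase h).filter fun τ => G.dist h τ ≠ G.dist v τ))
    (hL : isAPLandmark G k L) : isAPLandmark G k (L.erase h) := by
  intro u v huv
  by_cases hu : u = h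
  · subst hu
    exact hsep v (Ne.symm huv)
  by_cases hv : v = h
  · subst hv
    simpa only [ne_comm] using hsep u hu
  have hdist : G.dist u h = G.dist v h := by
    rw [SimpleGraph.dist_comm, SimpleGraph.dist_eq_one_iff_adj.2 (hadj u hu),
      SimpleGraph.dist_comm, SimpleGraph.dist_eq_one_iff_adj.2 (hadj v hv)]
  have hnot : h ∉ L.filter fun τ => G.dist u τ ≠ G.dist v τ :=
    fun hmem => (mem_filter.1 hmem).2 hdist
  rw [filter_erase, erase_eq_of_notMem hnot]
  exact hL u v huv

namespace wheelGraph

variable {m : ℕ}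

lemma adj_none {v : Option (ZMod m)} (hv : v ≠ none) : (wheelGraph m).Adj none v := by
  obtain ⟨j, rfl⟩ := Option.ne_none_iff_exists'.1 hv
  simp [wheelGraph]

lemma eq_add_one_or_eq_sub_one_of_adj {i j : ZMod m} (h : (wheelGraph m).Adj (some i) (some j)) :
    j = i + 1 ∨ j = i - 1 := by
  simp only [wheelGraph, SimpleGraph.fromRel_adj, reduceCtorEq, Option.some.injEq,
    false_or] at h
  obtain ⟨-, ⟨_, rfl, rfl⟩ | ⟨_, rfl, rfl⟩⟩ := h
  · exact .inl rfl
  · exact .inr (add_sub_cancel_right _ _).symm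

lemma eq_add_one_or_eq_sub_one_of_dist_eq {i : ZMod m} {τ : Option (ZMod m)}
    (h : (wheelGraph m).dist none τ = (wheelGraph m).dist (some i) τ) :
    τ = some (i + 1) ∨ τ = some (i - 1) := by
  cases τ with
  | none =>
    rw [SimpleGraph.dist_self, SimpleGraph.dist_comm,
      SimpleGraph.dist_eq_one_iff_adj.2 (adj_none (Option.some_ne_none i))] at h
    exact absurd h zero_ne_one
  | some j =>
    rw [SimpleGraph.dist_eq_one_iff_adj.2 (adj_none (Option.some_ne_none j)), eq_comm,
      SimpleGraph.dist_eq_one_iff_adj] at h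
    simpa only [Option.some.injEq] using eq_add_one_or_eq_sub_one_of_adj h

lemma card_le_card_filter_dist_ne_add_two (T : Finset (Option (ZMod m))) (i : ZMod m) :
    #T ≤ #(T.filter fun τ =>
      (wheelGraph m).dist none τ ≠ (wheelGraph m).dist (some i) τ) + 2 := by
  have hnot : #(T.filter fun τ =>
      ¬(wheelGraph m).dist none τ ≠ (wheelGraph m).dist (some i) τ) ≤ 2 := by
    refine (card_le_card (t := {some (i + 1), some (i - 1)}) fun τ hτ => ?_).trans card_le_two
    rw [mem_filter, not_not] at hτ
    simpa using eq_add_one_or_eq_sub_one_of_dist_eq hτ.2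
  have := card_filter_add_card_filter_not (s := T)
    fun τ => (wheelGraph m).dist none τ ≠ (wheelGraph m).dist (some i) τ
  omega

end wheelGraph

theorem stmt_14_general (n : ℕ) :
    (∀ L : Finset (Option (ZMod (n - 1))), apCond2 (n - 1) L →
      n / 2 ≤ (L.filter fun x => x ≠ none).card) ∧
    (∀ L : Finset (Option (ZMod (n - 1))), 4 ≤ (L.filter fun x => x ≠ none).card →
      (∀ i : ZMod (n - 1),
        2 ≤ ((L.filter fun x => x ≠ none).filter fun τ =>
          (wheelGraph (n - 1)).dist none τ ≠ (wheelGraph (n - 1)).dist (some i) τ).card) ∧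
      (isAPLandmark (wheelGraph (n - 1)) 2 L →
        isAPLandmark (wheelGraph (n - 1)) 2 (L.erase none))) := by
  simp only [filter_ne']
  refine ⟨fun L hL => ?_, fun L hL => ?_⟩
  · obtain hn | hn := Nat.lt_or_ge n 2
    · omega
    · have : NeZero (n - 1) := ⟨by omega⟩
      have := hL.le_two_mul_card_erase_none
      omega
  · have hsep (i : ZMod (n - 1)) : 2 ≤ #((L.erase none).filter fun τ =>
        (wheelGraph (n - 1)).dist none τ ≠ (wheelGraph (n - 1)).dist (some i) τ) := by
      have := wheelGraph.card_le_card_filter_dist_ne_add_two (L.erase none) i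
      omega
    refine ⟨hsep, isAPLandmark_erase_of_forall_adj (fun _ => wheelGraph.adj_none) ?_⟩
    rintro (_ | i) hv
    exacts [absurd rfl hv, hsep i]

/-- For the complete wheel graph on `n ≥ 6` vertices: every vertex set satisfying the AP
`k = 2` condition contains at least `⌊n/2⌋` cycle vertices; and for every `L` with at
least `4` cycle vertices, each pair `h, c_i` is separated by at least two vertices of
`L ∩ C`, hence if such an `L` is an AP `2`-landmark set then so is `L \ {h}`. -/
theorem stmt_14 (n : ℕ) (hn : 6 ≤ n) :
    (∀ L : Finset (Option (ZMod (n - 1))), apCond2 (n - 1) L →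
      n / 2 ≤ (L.filter fun x => x ≠ none).card) ∧
    (∀ L : Finset (Option (ZMod (n - 1))), 4 ≤ (L.filter fun x => x ≠ none).card →
      (∀ i : ZMod (n - 1),
        2 ≤ ((L.filter fun x => x ≠ none).filter fun τ =>
          (wheelGraph (n - 1)).dist none τ ≠ (wheelGraph (n - 1)).dist (some i) τ).card) ∧
      (isAPLandmark (wheelGraph (n - 1)) 2 L →
        isAPLandmark (wheelGraph (n - 1)) 2 (L.erase none))) :=
  stmt_14_general n
end
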